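/- arXiv:1705.02321 — 6 statements merged into one kernel-verified Lean document; each statement's English description precedes it below -/
import Mathlib

section
/- Conversely, if a payment vector p ∈ ℝ^k is not peaked (no coordinate exceeds all others by at least 1), then there exist empirical-mean vectors μ̂, μ̂' ∈ [0,1]^k such that the set of maximizers of μ̂_j + p_j differs from the set of maximizers of μ̂'_j + p_j. -/
theorem unpeaked_choice_varies (k : ℕ) (hk : 2 ≤ k) (p : Fin k → ℝ)
    (hnot : ¬ ∃ i : Fin k, ∀ j, j ≠ i → p j + 1 ≤ p i) :
    ∃ muhat muhat' : Fin k → ℝ,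
      (∀ j, muhat j ∈ Set.Icc (0:ℝ) 1) ∧ (∀ j, muhat' j ∈ Set.Icc (0:ℝ) 1) ∧
      {j : Fin k | ∀ l, muhat l + p l ≤ muhat j + p j} ≠
        {j : Fin k | ∀ l, muhat' l + p l ≤ muhat' j + p j} := by
  haveI : Nonempty (Fin k) := ⟨⟨0, by omega⟩⟩
  obtain ⟨i, hi⟩ := Finite.exists_max p
  push_neg at hnot
  obtain ⟨j, hji, hj⟩ := hnot i
  refine ⟨fun _ => 0, fun l => if l = j then 1 else 0, ?_, ?_, ?_⟩
  · intro _; exact ⟨le_refl 0, zero_le_one⟩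
  · intro l; by_cases h : l = j <;> simp [h]
  · intro hset
    have hiS : i ∈ {j : Fin k | ∀ l, (0:ℝ) + p l ≤ 0 + p j} := by
      intro l; simpa using hi l
    rw [hset] at hiS
    have := hiS j
    simp only [if_true, if_neg (show ¬ i = j from fun h => hji h.symm)] at this
    -- this : 1 + p j ≤ 0 + p i
    linarith [hj]
end

section
/- Let k arms each have a true mean μᵢ and confidence intervals [ℓᵢ, uᵢ] with μᵢ ∈ [ℓᵢ, uᵢ] for all i. Define arms i and j to be 'linked' if their intervals intersect, and 'chained' if they are in the same connected component of the transitive closure of the linked relation. Let X be the set of arms chained to the arm with the highest upper confidence bound. Then for any arm j ∉ X and any arm i ∈ X, uⱼ < ℓᵢ, and consequently μⱼ < μᵢ. -/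
theorem top_chain_separation (k : ℕ) (mu l u : Fin k → ℝ)
    (hvalid : ∀ i, mu i ∈ Set.Icc (l i) (u i))
    (istar : Fin k) (hstar : ∀ i, u i ≤ u istar)
    (X : Set (Fin k))
    (hX : X = {i | Relation.ReflTransGen
      (fun a b => l a ≤ u b ∧ l b ≤ u a) istar i}) :
    ∀ j ∉ X, ∀ i ∈ X, u j < l i ∧ mu j < mu i := by
  subst hX
  intro j hj i hi
  have hlu : ∀ x, l x ≤ u x := fun x => le_trans (hvalid x).1 (hvalid x).2
  have key : u j < l i := by
    clear hvalid
    induction hi with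
    | refl =>
      by_contra h
      push_neg at h
      exact hj (Relation.ReflTransGen.single ⟨h, le_trans (hlu j) (hstar j)⟩)
    | tail hb hbc ih =>
      by_contra h
      push_neg at h
      have h2 : u j < u _ := lt_of_lt_of_le ih hbc.1
      exact hj ((hb.tail hbc).tail ⟨h, le_trans (hlu j) (le_of_lt h2)⟩)
  exact ⟨key, lt_of_le_of_lt (hvalid j).2 (lt_of_lt_of_le key (hvalid i).1)⟩
end

section
/- Under the same chaining setup with valid confidence intervals, playing uniformly at random over the top chained set X is fair: for any two arms i, j, the probability of playing i exceeds that of playing j only if μᵢ > μⱼ. Concretely, with π_i = 1/|X| for i ∈ X and π_i = 0 otherwise, π_i > π_j implies μᵢ > μⱼ. -/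
theorem uniform_top_chain_fair (k : ℕ) (mu l u : Fin k → ℝ)
    (hvalid : ∀ i, mu i ∈ Set.Icc (l i) (u i))
    (istar : Fin k) (hstar : ∀ i, u i ≤ u istar)
    (X : Finset (Fin k))
    (hX : ∀ i, i ∈ X ↔ Relation.ReflTransGen
      (fun a b => l a ≤ u b ∧ l b ≤ u a) istar i)
    (π : Fin k → ℝ)
    (hπ : π = fun i => if i ∈ X then 1 / (X.card : ℝ) else 0) :
    ∀ i j : Fin k, π j < π i → mu j < mu i := by
  intro i j hij
  subst hπ
  simp only at hij
  -- i must be in X and j not in X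
  by_cases hiX : i ∈ X
  · by_cases hjX : j ∈ X
    · simp [hiX, hjX] at hij
    · -- main case
      -- first: u j < l istar
      have histar : istar ∈ X := (hX istar).2 Relation.ReflTransGen.refl
      have hlj : l j ≤ u j := le_trans (hvalid j).1 (hvalid j).2
      have hujistar : u j < l istar := by
        by_contra h
        push_neg at h
        exact hjX ((hX j).2 (Relation.ReflTransGen.single
          ⟨h, le_trans hlj (hstar j)⟩))
      -- every a in X has l j ≤ u a
      have key : ∀ a : Fin k, Relation.ReflTransGen
          (fun a b => l a ≤ u b ∧ l b ≤ u a) istar a → l j ≤ u a := by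
        intro a ha
        induction ha with
        | refl => exact le_trans hlj (hstar j)
        | tail hab hbc ih =>
          rename_i b c
          by_contra h
          push_neg at h
          -- then b overlaps j, so j ∈ X
          exact hjX ((hX j).2 (Relation.ReflTransGen.tail hab
            ⟨le_trans hbc.1 (lt_of_lt_of_le h hlj).le, ih⟩))
      have hluj : l i > u j := by
        by_contra h
        push_neg at h
        exact hjX ((hX j).2 (Relation.ReflTransGen.tail ((hX i).1 hiX) ⟨h, key i ((hX i).1 hiX)⟩))
      calc mu j ≤ u j := (hvalid j).2
        _ < l i := hluj
        _ ≤ mu i := (hvalid i).1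
  · -- i ∉ X: π i = 0, contradiction
    have : (0:ℝ) ≤ if j ∈ X then 1 / (X.card : ℝ) else 0 := by
      positivity
    simp only [hiX, if_false, one_div] at hij
    simp only [one_div] at this
    linarith
end

section
/- Let S be a set of arms consisting of the k' arms with highest upper confidence bounds, and let S̄ = S ∪ {arms chained to some arm in S}, where intervals [ℓᵢ, uᵢ] are valid (μᵢ ∈ [ℓᵢ, uᵢ]). Then playing uniformly at random over S̄ is fair: for any i ∈ S̄ and j ∉ S̄, μⱼ < μᵢ. -/
theorem top_kprime_chain_fair (k k' : ℕ) (mu l u : Fin k → ℝ)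
    (hvalid : ∀ i, mu i ∈ Set.Icc (l i) (u i))
    (S : Finset (Fin k)) (hcard : S.card = k')
    (htop : ∀ i ∈ S, ∀ j ∉ S, u j ≤ u i)
    (Sbar : Set (Fin k))
    (hSbar : Sbar = {i | ∃ s ∈ S, Relation.ReflTransGen
      (fun a b => l a ≤ u b ∧ l b ≤ u a) s i}) :
    ∀ i ∈ Sbar, ∀ j ∉ Sbar, mu j < mu i := by
  subst hSbar
  intro i hi j hj
  have hjS : j ∉ S := fun h => hj ⟨j, h, Relation.ReflTransGen.refl⟩
  obtain ⟨s, hs, hchain⟩ := hi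
  have key : u j < l i := by
    induction hchain with
    | refl =>
      by_contra hle
      push_neg at hle
      exact hj ⟨s, hs, Relation.ReflTransGen.tail Relation.ReflTransGen.refl
        ⟨hle, le_trans (le_trans (hvalid j).1 (hvalid j).2) (htop s hs j hjS)⟩⟩
    | tail hsb hbi ih =>
      by_contra hle
      push_neg at hle
      have huj : l j ≤ u _ := le_trans (le_trans (le_trans (hvalid j).1 (hvalid j).2)
        (le_of_lt ih)) hbi.1
      exact hj ⟨s, hs, Relation.ReflTransGen.tail
        (Relation.ReflTransGen.tail hsb hbi) ⟨hle, huj⟩⟩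
  exact lt_of_le_of_lt (hvalid j).2 (lt_of_lt_of_le key (hvalid i).1)
end

section
/- Consider the two-arm payment scheme: at each round, the principal offers payment p = w₁ + w₂ (the sum of the two arms' confidence widths) on a uniformly chosen arm and 0 on the other, where wᵢ = ConfidenceWidth and |μ̂ᵢ − μᵢ| < wᵢ/2. If |μ̂₁ − μ̂₂| < p, the myopic agent follows the payment and each arm is played with probability 1/2; if |μ̂₁ − μ̂₂| ≥ p, the agent deterministically plays the arm with higher empirical mean, and in that case the arm with higher empirical mean also has strictly higher true mean. Hence the scheme is fair in each round. -/
theorem two_arm_scheme_fair (mu muhat w : Fin 2 → ℝ)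
    (hw : ∀ i, |muhat i - mu i| < w i / 2)
    (p : ℝ) (hp : p = w 0 + w 1)
    (π : Fin 2 → ℝ)
    (hclose : |muhat 0 - muhat 1| < p → π 0 = 1/2 ∧ π 1 = 1/2)
    (hfar : p ≤ |muhat 0 - muhat 1| →
      (muhat 1 < muhat 0 → π 0 = 1 ∧ π 1 = 0) ∧
      (muhat 0 < muhat 1 → π 1 = 1 ∧ π 0 = 0)) :
    ∀ i j : Fin 2, π j < π i → mu j < mu i := by
  have h0 := hw 0
  have h1 := hw 1
  have h0' := abs_lt.mp h0
  have h1' := abs_lt.mp h1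
  intro i j hij
  by_cases hc : |muhat 0 - muhat 1| < p
  · obtain ⟨e0, e1⟩ := hclose hc
    fin_cases i <;> fin_cases j <;> simp_all <;> linarith
  · push_neg at hc
    have hd' := le_abs.mp hc
    rcases lt_trichotomy (muhat 0) (muhat 1) with h | h | h
    · obtain ⟨e1, e0⟩ := (hfar hc).2 h
      have hge : muhat 1 - muhat 0 ≥ p := by
        rcases hd' with hx | hx
        · linarith
        · linarith
      have : mu 0 < mu 1 := by linarith
      fin_cases i <;> fin_cases j <;> simp_all <;> linarith
    · exfalso
      have : |muhat 0 - muhat 1| = 0 := by rw [h]; simp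
      nlinarith [abs_nonneg (muhat 0 - mu 0), abs_nonneg (muhat 1 - mu 1)]
    · obtain ⟨e0, e1⟩ := (hfar hc).1 h
      have hge : muhat 0 - muhat 1 ≥ p := by
        rcases hd' with hx | hx
        · linarith
        · linarith
      have : mu 1 < mu 0 := by linarith
      fin_cases i <;> fin_cases j <;> simp_all <;> linarith
end

section
/- In the FindChained procedure, where starting from a singleton R = {i₀} (the arm with highest empirical mean in X̂), one repeatedly adds to R any arm of X̂ whose empirical mean is within 2x of some arm already in R (payments increase by 2x per round for arms not yet chosen): upon termination, every arm j in the output R satisfies μ̂ⱼ ≥ min_{j' ∈ R \ {j}} μ̂ⱼ' − 4x, and the spread of output empirical means satisfies max_{j∈R} μ̂ⱼ − min_{j∈R} μ̂ⱼ ≤ (2|R| + 2)·x, given that during the procedure each arm's empirical mean changes by at most x. -/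
lemma findchained_key (m : ℕ) (x : ℝ) (hx : 0 < x) (a : Fin m → ℝ)
    (hchain : ∀ j : Fin m, 0 < (j : ℕ) →
      ∃ j' : Fin m, (j' : ℕ) < (j : ℕ) ∧ |a j - a j'| ≤ 2 * x) :
    ∀ k : ℕ, ∀ i j : Fin m, (i : ℕ) ≤ k → (j : ℕ) ≤ k →
      a i - a j ≤ 2 * (k : ℝ) * x := by
  intro k
  induction k with
  | zero =>
    intro i j hi hj
    have : i = j := by
      apply Fin.ext; omega
    simp [this]
  | succ k ih =>
    intro i j hi hj
    have step : ∀ p : Fin m, (p : ℕ) = k + 1 →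
        (∀ q : Fin m, (q : ℕ) ≤ k → a p - a q ≤ 2 * x + 2 * k * x ∧
          a q - a p ≤ 2 * x + 2 * k * x) := by
      intro p hp q hq
      obtain ⟨p', hp', habs⟩ := hchain p (by omega)
      have hp'k : (p' : ℕ) ≤ k := by omega
      have h1 := ih p' q hp'k hq
      have h2 := ih q p' hq hp'k
      have h3 := abs_le.mp habs
      constructor <;> linarith [h3.1, h3.2]
    rcases Nat.lt_or_ge (i : ℕ) (k + 1) with hik | hik
    · rcases Nat.lt_or_ge (j : ℕ) (k + 1) with hjk | hjk
      · have := ih i j (by omega) (by omega)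
        push_cast
        nlinarith
      · have hj1 : (j : ℕ) = k + 1 := by omega
        have := (step j hj1 i (by omega)).2
        push_cast
        linarith
    · have hi1 : (i : ℕ) = k + 1 := by omega
      rcases Nat.lt_or_ge (j : ℕ) (k + 1) with hjk | hjk
      · have := (step i hi1 j (by omega)).1
        push_cast
        linarith
      · have : i = j := by apply Fin.ext; omega
        simp [this]
        positivity

theorem findchained_output_structure (m : ℕ) (hm : 2 ≤ m) (x : ℝ) (hx : 0 < x)
    (a b : Fin m → ℝ)
    (hdrift : ∀ j, |a j - b j| ≤ x)
    (hchain : ∀ j : Fin m, 0 < (j : ℕ) →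
      ∃ j' : Fin m, (j' : ℕ) < (j : ℕ) ∧ |a j - a j'| ≤ 2 * x) :
    (∀ j : Fin m, ∃ j' : Fin m, j' ≠ j ∧ b j' - 4 * x ≤ b j) ∧
      (∀ j j' : Fin m, b j - b j' ≤ (2 * (m : ℝ) + 2) * x) := by
  constructor
  · intro j
    rcases Nat.eq_zero_or_pos (j : ℕ) with hj | hj
    · -- j = 0: use arm 1's chain predecessor, which must be j itself
      have h1 : (1 : ℕ) < m := by omega
      let one : Fin m := ⟨1, h1⟩
      obtain ⟨j', hj', habs⟩ := hchain one (by simp [one])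
      have hj'0 : (j' : ℕ) = 0 := by simp [one] at hj'; omega
      have hj'j : j' = j := by apply Fin.ext; omega
      refine ⟨one, ?_, ?_⟩
      · intro h
        have : (one : ℕ) = (j : ℕ) := by rw [h]
        simp [one] at this; omega
      · have h3 := abs_le.mp habs
        have d1 := abs_le.mp (hdrift one)
        have d2 := abs_le.mp (hdrift j)
        rw [hj'j] at h3
        linarith [h3.1, h3.2, d1.1, d1.2, d2.1, d2.2]
    · obtain ⟨j', hj', habs⟩ := hchain j hj
      refine ⟨j', ?_, ?_⟩
      · intro h
        rw [h] at hj'; omega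
      · have h3 := abs_le.mp habs
        have d1 := abs_le.mp (hdrift j)
        have d2 := abs_le.mp (hdrift j')
        linarith [h3.1, h3.2, d1.1, d1.2, d2.1, d2.2]
  · intro j j'
    have key := findchained_key m x hx a hchain (m - 1) j j'
      (by omega) (by omega)
    have d1 := abs_le.mp (hdrift j)
    have d2 := abs_le.mp (hdrift j')
    have hmc : ((m - 1 : ℕ) : ℝ) = (m : ℝ) - 1 := by
      have : 1 ≤ m := by omega
      push_cast [this]
      ring
    rw [hmc] at key
    nlinarith
end
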